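/- Let L'(x) denote the 4×4 block matrix [[σ(x)I₂, σ₂R⊥], [−σ₂R⊥, σ(x)I₂]] (the translated tensor L'_c at c = σ₂), and let g' := f₂/σ₂ + 2f₁/(σ₁+σ₂). For an integrable field E : Ω → ℝ⁴ the following are equivalent: (i) L'(x)E(x) = (1/g')·[[I₂, R⊥],[−R⊥, I₂]]·⟨E⟩ for almost every x ∈ Ω; (ii) there exist real numbers a₁, a₂ such that L'(x)E(x) = (a₁, a₂, −a₂, a₁)ᵀ for almost every x ∈ Ω. -/

import Mathlib

/-!
With `B = [[I₂, R⊥], [-R⊥, I₂]]` and `R⊥² = -I₂`, one has `B L'(x) = (σ(x) + σ₂) B`, and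
`B w = 2 w` for every `w = (a₁, a₂, -a₂, a₁)`. So `L'(x) E(x) = w` forces
`B E(x) = 2 / (σ(x) + σ₂) • w`, and averaging gives `B ⟨E⟩ = ⟨2 / (σ + σ₂)⟩ w = g' w`, because `σ`
only takes the values `σ₁` and `σ₂`. Conversely `g'⁻¹ B ⟨E⟩` has the form of `w` for any `E`.
-/

open MeasureTheory Matrix

noncomputable section

/-- Average of a scalar function over `Ω`. -/
def avg (Ω : Set (Fin 2 → ℝ)) (h : (Fin 2 → ℝ) → ℝ) : ℝ :=
  ((volume Ω).toReal)⁻¹ * ∫ x in Ω, h x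

/-- The 4×4 block matrix `[[I₂, R⊥], [-R⊥, I₂]]`. -/
def blockIRperp : Matrix (Fin 4) (Fin 4) ℝ :=
  !![1, 0, 0, 1;
     0, 1, -1, 0;
     0, -1, 1, 0;
     1, 0, 0, 1]

def translatedTensor (s t : ℝ) : Matrix (Fin 4) (Fin 4) ℝ :=
  !![s, 0, 0, t;
     0, s, -t, 0;
     0, -t, s, 0;
     t, 0, 0, s]

theorem blockIRperp_mul_translatedTensor (s t : ℝ) :
    blockIRperp * translatedTensor s t = (s + t) • blockIRperp := by
  ext i j
  fin_cases i <;> fin_cases j <;>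
    simp [blockIRperp, translatedTensor, Matrix.mul_apply, Fin.sum_univ_four] <;> ring

theorem blockIRperp_mulVec (v : Fin 4 → ℝ) :
    blockIRperp *ᵥ v = ![v 0 + v 3, v 1 - v 2, -(v 1 - v 2), v 0 + v 3] := by
  ext i
  fin_cases i <;> simp [blockIRperp, mulVec, dotProduct, Fin.sum_univ_four] <;> ring

theorem exists_smul_blockIRperp_mulVec_eq (c : ℝ) (v : Fin 4 → ℝ) :
    ∃ b₁ b₂ : ℝ, c • blockIRperp *ᵥ v = ![b₁, b₂, -b₂, b₁] :=
  ⟨c * (v 0 + v 3), c * (v 1 - v 2), by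
    simp only [blockIRperp_mulVec, smul_cons, smul_eq_mul, mul_neg, smul_empty]⟩

theorem blockIRperp_mulVec_pair (a₁ a₂ : ℝ) :
    blockIRperp *ᵥ ![a₁, a₂, -a₂, a₁] = (2 : ℝ) • ![a₁, a₂, -a₂, a₁] := by
  simp [blockIRperp_mulVec, smul_cons, sub_neg_eq_add, ← two_mul]

theorem blockIRperp_mulVec_eq_of_translatedTensor_mulVec {s t a₁ a₂ : ℝ} {e : Fin 4 → ℝ}
    (hst : s + t ≠ 0) (he : translatedTensor s t *ᵥ e = ![a₁, a₂, -a₂, a₁]) :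
    blockIRperp *ᵥ e = (2 / (s + t)) • ![a₁, a₂, -a₂, a₁] := by
  have h : (s + t) • blockIRperp *ᵥ e = (2 : ℝ) • ![a₁, a₂, -a₂, a₁] := by
    rw [← smul_mulVec, ← blockIRperp_mul_translatedTensor, ← mulVec_mulVec, he,
      blockIRperp_mulVec_pair]
  rw [div_eq_inv_mul, mul_smul, ← h, smul_smul, inv_mul_cancel₀ hst, one_smul]

theorem apply_two_phase (φ : ℝ → ℝ) {χ : ℝ} (hχ : χ = 0 ∨ χ = 1) (u v : ℝ) :
    φ (u * χ + v * (1 - χ)) = φ u * χ + φ v * (1 - χ) := by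
  rcases hχ with rfl | rfl <;> simp

theorem isFiniteMeasure_restrict_of_toReal_pos {α : Type*} [MeasurableSpace α]
    {μ : Measure α} {s : Set α} (hs : 0 < (μ s).toReal) : IsFiniteMeasure (μ.restrict s) :=
  isFiniteMeasure_restrict.2 (ENNReal.toReal_pos_iff.1 hs).2.ne

theorem integrable_of_eq_zero_or_eq_one {α : Type*} [MeasurableSpace α] {μ : Measure α}
    [IsFiniteMeasure μ] {χ : α → ℝ} (hχ : Measurable χ) (h01 : ∀ x, χ x = 0 ∨ χ x = 1) :
    Integrable χ μ :=
  (integrable_const (1 : ℝ)).mono' hχ.aestronglyMeasurable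
    (ae_of_all _ fun x => by rcases h01 x with h | h <;> simp [h])

section avg

variable {Ω : Set (Fin 2 → ℝ)}

theorem avg_const_mul (c : ℝ) (h : (Fin 2 → ℝ) → ℝ) :
    avg Ω (fun x => c * h x) = c * avg Ω h := by
  simp only [avg, integral_const_mul]
  ring

theorem avg_mul_const (h : (Fin 2 → ℝ) → ℝ) (c : ℝ) :
    avg Ω (fun x => h x * c) = avg Ω h * c := by
  simp only [avg, integral_mul_const]
  ring

theorem avg_add {h k : (Fin 2 → ℝ) → ℝ} (hh : Integrable h (volume.restrict Ω))
    (hk : Integrable k (volume.restrict Ω)) :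
    avg Ω (fun x => h x + k x) = avg Ω h + avg Ω k := by
  simp only [avg, integral_add hh hk, mul_add]

theorem avg_sub {h k : (Fin 2 → ℝ) → ℝ} (hh : Integrable h (volume.restrict Ω))
    (hk : Integrable k (volume.restrict Ω)) :
    avg Ω (fun x => h x - k x) = avg Ω h - avg Ω k := by
  simp only [avg, integral_sub hh hk, mul_sub]

theorem avg_const (hΩ : 0 < (volume Ω).toReal) (c : ℝ) : avg Ω (fun _ => c) = c := by
  simp [avg, Measure.real, hΩ.ne']

theorem avg_nonneg {h : (Fin 2 → ℝ) → ℝ} (hh : ∀ x, 0 ≤ h x) : 0 ≤ avg Ω h :=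
  mul_nonneg (by positivity) (integral_nonneg hh)

theorem avg_congr_ae {h k : (Fin 2 → ℝ) → ℝ} (hhk : h =ᵐ[volume.restrict Ω] k) :
    avg Ω h = avg Ω k := by
  rw [avg, avg, integral_congr_ae hhk]

theorem mulVec_avg {m n : Type*} [Fintype n] (M : Matrix m n ℝ) {E : (Fin 2 → ℝ) → n → ℝ}
    (hE : ∀ j, Integrable (fun x => E x j) (volume.restrict Ω)) :
    M *ᵥ (fun j => avg Ω fun x => E x j) = fun i => avg Ω fun x => (M *ᵥ E x) i := by
  ext i
  simp only [avg, mulVec, dotProduct, integral_finsetSum _ fun j _ => (hE j).const_mul (M i j),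
    integral_const_mul, Finset.mul_sum]
  exact Finset.sum_congr rfl fun j _ => by ring

theorem mulVec_avg_eq_avg_smul {m n : Type*} [Fintype n] {M : Matrix m n ℝ}
    {E : (Fin 2 → ℝ) → n → ℝ} (hE : ∀ j, Integrable (fun x => E x j) (volume.restrict Ω))
    {ψ : (Fin 2 → ℝ) → ℝ} {w : m → ℝ} (hME : ∀ᵐ x ∂(volume.restrict Ω), M *ᵥ E x = ψ x • w) :
    M *ᵥ (fun j => avg Ω fun x => E x j) = avg Ω ψ • w := by
  rw [mulVec_avg M hE]
  ext i
  rw [avg_congr_ae (hME.mono fun x hx => congrFun hx i)]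
  exact avg_mul_const ψ (w i)

theorem avg_mem_Icc (hΩ : 0 < (volume Ω).toReal) {χ : (Fin 2 → ℝ) → ℝ}
    (hχ : Integrable χ (volume.restrict Ω)) (h01 : ∀ x, χ x ∈ Set.Icc 0 1) :
    avg Ω χ ∈ Set.Icc 0 1 := by
  have := isFiniteMeasure_restrict_of_toReal_pos hΩ
  have h1 := avg_nonneg (Ω := Ω) fun x => sub_nonneg.2 (h01 x).2
  rw [avg_sub (integrable_const 1) hχ, avg_const hΩ, sub_nonneg] at h1
  exact ⟨avg_nonneg fun x => (h01 x).1, h1⟩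

theorem avg_two_phase (hΩ : 0 < (volume Ω).toReal) {χ : (Fin 2 → ℝ) → ℝ}
    (hχ : Integrable χ (volume.restrict Ω)) (u v : ℝ) :
    avg Ω (fun x => u * χ x + v * (1 - χ x)) = u * avg Ω χ + v * (1 - avg Ω χ) := by
  have := isFiniteMeasure_restrict_of_toReal_pos hΩ
  have hχc : Integrable (fun x => 1 - χ x) (volume.restrict Ω) := (integrable_const 1).sub hχ
  rw [avg_add (hχ.const_mul u) (hχc.const_mul v), avg_const_mul, avg_const_mul,
    avg_sub (integrable_const 1) hχ, avg_const hΩ]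

end avg

theorem upper_bound_attainability_equiv_general
    (Ω : Set (Fin 2 → ℝ)) (hΩpos : 0 < (volume Ω).toReal)
    (χ₁ : (Fin 2 → ℝ) → ℝ) (hχmeas : Measurable χ₁)
    (hχ01 : ∀ x, χ₁ x = 0 ∨ χ₁ x = 1)
    (σ₁ σ₂ : ℝ) (hσ₂ : 0 < σ₂) (hσ : σ₂ < σ₁)
    (σ : (Fin 2 → ℝ) → ℝ)
    (hσdef : ∀ x, σ x = σ₁ * χ₁ x + σ₂ * (1 - χ₁ x))
    (f₁ f₂ : ℝ) (hf₁ : f₁ = avg Ω χ₁) (hf₂ : f₂ = 1 - f₁)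
    -- `L' x` is the translated tensor `L'_c` at `c = σ₂`:
    -- the block matrix `[[σ(x) I₂, σ₂ R⊥], [-σ₂ R⊥, σ(x) I₂]]`
    (L' : (Fin 2 → ℝ) → Matrix (Fin 4) (Fin 4) ℝ)
    (hL' : ∀ x, L' x = !![σ x, 0, 0, σ₂;
                          0, σ x, -σ₂, 0;
                          0, -σ₂, σ x, 0;
                          σ₂, 0, 0, σ x])
    (g' : ℝ) (hg' : g' = f₂ / σ₂ + 2 * f₁ / (σ₁ + σ₂))
    (E : (Fin 2 → ℝ) → (Fin 4 → ℝ))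
    (hEint : ∀ i : Fin 4, Integrable (fun x => E x i) (volume.restrict Ω))
    (avgE : Fin 4 → ℝ) (havgE : ∀ i, avgE i = avg Ω (fun x => E x i)) :
    (∀ᵐ x ∂(volume.restrict Ω),
        (L' x).mulVec (E x) = g'⁻¹ • blockIRperp.mulVec avgE) ↔
    (∃ a₁ a₂ : ℝ, ∀ᵐ x ∂(volume.restrict Ω),
        (L' x).mulVec (E x) = ![a₁, a₂, -a₂, a₁]) := by
  have := isFiniteMeasure_restrict_of_toReal_pos hΩpos
  have hσpos : ∀ x, 0 < σ x + σ₂ := fun x => by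
    rcases hχ01 x with h | h <;> simp only [hσdef, h] <;> linarith
  have hχint : Integrable χ₁ (volume.restrict Ω) := integrable_of_eq_zero_or_eq_one hχmeas hχ01
  have hf₁mem : f₁ ∈ Set.Icc 0 1 :=
    hf₁ ▸ avg_mem_Icc hΩpos hχint fun x => by rcases hχ01 x with h | h <;> simp [h]
  have hg'ne : g' ≠ 0 := by
    rw [hg', hf₂, div_add_div _ _ hσ₂.ne' (by linarith)]
    exact (div_pos (by nlinarith [hf₁mem.1, hf₁mem.2]) (by nlinarith)).ne'
  have hg'avg : avg Ω (fun x => 2 / (σ x + σ₂)) = g' := by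
    simp only [hσdef, apply_two_phase (fun s => 2 / (s + σ₂)) (hχ01 _)]
    rw [avg_two_phase hΩpos hχint, ← hf₁, ← hf₂, hg']
    field_simp
    ring
  constructor
  · intro h
    obtain ⟨b₁, b₂, hb⟩ := exists_smul_blockIRperp_mulVec_eq g'⁻¹ avgE
    exact ⟨b₁, b₂, hb ▸ h⟩
  · rintro ⟨a₁, a₂, h⟩
    have hBE : ∀ᵐ x ∂(volume.restrict Ω),
        blockIRperp *ᵥ E x = (2 / (σ x + σ₂)) • ![a₁, a₂, -a₂, a₁] := by
      filter_upwards [h] with x hx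
      exact blockIRperp_mulVec_eq_of_translatedTensor_mulVec (hσpos x).ne' (by rwa [hL'] at hx)
    have hBavg : blockIRperp *ᵥ avgE = g' • ![a₁, a₂, -a₂, a₁] := by
      rw [funext havgE, mulVec_avg_eq_avg_smul hEint hBE, hg'avg]
    filter_upwards [h] with x hx
    rw [hx, hBavg, smul_smul, inv_mul_cancel₀ hg'ne, one_smul]

/-- Equivalence of the two forms of the attainability condition for the translation
upper bound (the dual of Theorem 3.1 of the paper). -/
theorem upper_bound_attainability_equiv
    (Ω : Set (Fin 2 → ℝ)) (hΩmeas : MeasurableSet Ω)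
    (hΩbdd : Bornology.IsBounded Ω) (hΩpos : 0 < (volume Ω).toReal)
    (χ₁ : (Fin 2 → ℝ) → ℝ) (hχmeas : Measurable χ₁)
    (hχ01 : ∀ x, χ₁ x = 0 ∨ χ₁ x = 1)
    (σ₁ σ₂ : ℝ) (hσ₂ : 0 < σ₂) (hσ : σ₂ < σ₁)
    (σ : (Fin 2 → ℝ) → ℝ)
    (hσdef : ∀ x, σ x = σ₁ * χ₁ x + σ₂ * (1 - χ₁ x))
    (f₁ f₂ : ℝ) (hf₁ : f₁ = avg Ω χ₁) (hf₂ : f₂ = 1 - f₁)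
    -- `L' x` is the translated tensor `L'_c` at `c = σ₂`:
    -- the block matrix `[[σ(x) I₂, σ₂ R⊥], [-σ₂ R⊥, σ(x) I₂]]`
    (L' : (Fin 2 → ℝ) → Matrix (Fin 4) (Fin 4) ℝ)
    (hL' : ∀ x, L' x = !![σ x, 0, 0, σ₂;
                          0, σ x, -σ₂, 0;
                          0, -σ₂, σ x, 0;
                          σ₂, 0, 0, σ x])
    (g' : ℝ) (hg' : g' = f₂ / σ₂ + 2 * f₁ / (σ₁ + σ₂))
    (E : (Fin 2 → ℝ) → (Fin 4 → ℝ))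
    (hEint : ∀ i : Fin 4, Integrable (fun x => E x i) (volume.restrict Ω))
    (avgE : Fin 4 → ℝ) (havgE : ∀ i, avgE i = avg Ω (fun x => E x i)) :
    (∀ᵐ x ∂(volume.restrict Ω),
        (L' x).mulVec (E x) = g'⁻¹ • blockIRperp.mulVec avgE) ↔
    (∃ a₁ a₂ : ℝ, ∀ᵐ x ∂(volume.restrict Ω),
        (L' x).mulVec (E x) = ![a₁, a₂, -a₂, a₁]) :=
  upper_bound_attainability_equiv_general Ω hΩpos χ₁ hχmeas hχ01 σ₁ σ₂ hσ₂ hσ σ hσdef f₁ f₂ hf₁ hf₂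
    L' hL' g' hg' E hEint avgE havgE
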